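/- Let (W,S) be a Coxeter system, X ⊆ S, and w a word on S with reflection sequence R(w) = (r_1(w),…,r_k(w)). Let w_X = t_1⋯t_p be the word on X constructed from w as follows: j₁ < ⋯ < j_p are the positions with r_{j_n}(w) ∈ W_X, and t_n = w_{j_n−1}·s_{i_{j_n}}·w_{j_n−1}⁻¹ ∈ X where w_{j−1} is the (X,∅)-reduced part of the prefix of length j−1. Then the reflection sequence of w_X equals the subsequence of R(w) consisting of the entries lying in W_X: r_n(w_X) = r_{j_n}(w) for all 1 ≤ n ≤ p. -/

import Mathlib

/-- The standard parabolic subgroup of a Coxeter system generated by the simple reflections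
indexed by `X`. -/
def CoxeterSystem.standardParabolic {B W : Type*} [Group W] {M : CoxeterMatrix B}
    (cs : CoxeterSystem M W) (X : Set B) : Subgroup W :=
  Subgroup.closure (cs.simple '' X)

/-!
Write the prefixes of `w` as `π (w.take j) = v j * u j` with `u j` minimal in its coset
`P * u j`. Passing to the next prefix multiplies `u j` on the right by `s = s_{i_j}`. If the
reflection `t = u j * s * (u j)⁻¹` lies in `P`, then `u j * s = t * u j`, so the representative
stays and `v` is multiplied by `t = s_{q_j}`; otherwise `u j * s` is again minimal (Deodhar's
lemma) and `v` stays. Hence `π (w_X.take n) = v j_n`, and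
`r_n(w_X) = v j_n * t * (v j_n)⁻¹ = r_{j_n}(w)`.

Deodhar's lemma rests on the exchange property, which comes from the sign representation of `W`
on `W × {±1}`: the parity of the number of occurrences of `t` in `lis ω` depends only on `π ω`.
-/

open List

theorem List.filter_eq_map_filter_range {α : Type*} (l : List α) (p : α → Bool) (d : α) :
    l.filter p = ((range l.length).filter fun m => p (l.getD m d)).map fun m => l.getD m d := by
  have hl : (range l.length).map (fun m => l.getD m d) = l :=
    ext_getElem (by simp) fun m _ hm => by simp [getElem?_eq_getElem hm]
  conv_lhs => rw [← hl]
  rw [filter_map]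
  rfl

namespace CoxeterSystem

variable {B W : Type*} [Group W] {M : CoxeterMatrix B} (cs : CoxeterSystem M W)

local prefix:100 "s " => cs.simple
local prefix:100 "π " => cs.wordProd
local prefix:100 "ℓ " => cs.length
local prefix:100 "lis " => cs.leftInvSeq

theorem simple_mul_mul_simple_eq_simple_iff (i : B) (t : W) :
    s i * t * s i = s i ↔ t = s i := by
  constructor
  · intro h
    simpa [mul_assoc] using congrArg (fun x => s i * x * s i) h
  · rintro rfl
    simp

theorem prod_map_alternatingWord_two_mul {G : Type*} [Monoid G] (f : B → G) (i j : B) (m : ℕ) :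
    ((alternatingWord i j (2 * m)).map f).prod = (f i * f j) ^ m := by
  induction m with
  | zero => simp [alternatingWord]
  | succ m ih =>
    rw [show 2 * (m + 1) = 2 * m + 1 + 1 by ring, alternatingWord_succ', alternatingWord_succ']
    simp [ih, pow_succ', mul_assoc]

theorem wordProd_alternatingWord_two_mul (i j : B) (m : ℕ) :
    π (alternatingWord i j (2 * m)) = (s i * s j) ^ m := by
  simp [prod_alternatingWord_eq_mul_pow]

theorem leftInvSeq_alternatingWord_two_mul (i j : B) (m : ℕ) :
    lis (alternatingWord i j (2 * m)) = (range (2 * m)).map fun k => s i * (s j * s i) ^ k := by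
  refine ext_getElem (by simp) fun k hk _ => ?_
  rw [getElem_leftInvSeq_alternatingWord cs i j m k (by simpa using hk),
    prod_alternatingWord_eq_mul_pow]
  simp [show (2 * k + 1) / 2 = k by omega]

section ReflectionRepresentation

variable [DecidableEq W]

def reflPerm (i : B) : Equiv.Perm (W × ℤˣ) :=
  Function.Involutive.toPerm (fun p => (s i * p.1 * s i, if p.1 = s i then -p.2 else p.2)) <| by
    rintro ⟨t, ε⟩
    simp only [simple_mul_mul_simple_eq_simple_iff, Prod.mk.injEq]
    refine ⟨by simp [mul_assoc], by split_ifs <;> simp⟩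

theorem reflPerm_apply (i : B) (t : W) (ε : ℤˣ) :
    cs.reflPerm i (t, ε) = (s i * t * s i, ε * (-1) ^ [s i].count t) := by
  change (_, if t = s i then -ε else ε) = _
  by_cases ht : t = s i
  · simp [ht]
  · simp [ht, Ne.symm ht]

theorem prod_map_reflPerm_apply (ω : List B) (t : W) (ε : ℤˣ) :
    (ω.map cs.reflPerm).prod (t, ε) =
      (π ω * t * (π ω)⁻¹, ε * (-1) ^ (lis ω).count (π ω * t * (π ω)⁻¹)) := by
  induction ω using List.reverseRecOn generalizing t ε with
  | nil => simp
  | append_singleton ω i ih =>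
    have hlis : lis (ω ++ [i]) = lis ω ++ [π ω * s i * (π ω)⁻¹] := by
      simpa using cs.leftInvSeq_concat ω i
    have hcount : [s i].count t =
        [π ω * s i * (π ω)⁻¹].count (π ω * (s i * t * s i) * (π ω)⁻¹) := by
      simp only [count_singleton, beq_iff_eq, mul_left_inj, mul_right_inj, eq_comm (a := s i),
        simple_mul_mul_simple_eq_simple_iff]
    rw [map_append, prod_append, map_singleton, prod_singleton, Equiv.Perm.mul_apply,
      reflPerm_apply, ih, hlis, count_append, hcount, pow_add, wordProd_append, wordProd_singleton]
    simp only [mul_inv_rev, inv_simple, Prod.mk.injEq, mul_assoc, true_and]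
    ac_rfl

theorem isLiftable_reflPerm : M.IsLiftable cs.reflPerm := by
  intro i j
  ext ⟨t, ε⟩ : 1
  have hperiod : ∀ k, s i * (s j * s i) ^ (M i j + k) = s i * (s j * s i) ^ k := by
    intro k
    rw [pow_add, simple_mul_simple_pow', one_mul]
  -- `lis` of the word `(i j)^(M i j)` runs twice through the reflections `s i (s j s i)^k`.
  have hlis : (lis alternatingWord i j (2 * M i j)).count t =
      2 * ((range (M i j)).map fun k => s i * (s j * s i) ^ k).count t := by
    rw [leftInvSeq_alternatingWord_two_mul, two_mul, range_add, map_append, map_map, count_append,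
      two_mul]
    congr 2
    exact map_congr_left fun k _ => hperiod k
  rw [← prod_map_alternatingWord_two_mul, prod_map_reflPerm_apply, wordProd_alternatingWord_two_mul,
    simple_mul_simple_pow, one_mul, inv_one, mul_one, hlis, pow_mul]
  simp

theorem neg_one_pow_count_leftInvSeq_eq_of_wordProd_eq {ω ω' : List B} (h : π ω = π ω')
    (t : W) : (-1 : ℤˣ) ^ (lis ω).count t = (-1 : ℤˣ) ^ (lis ω').count t := by
  have hlift (ω : List B) : cs.lift ⟨cs.reflPerm, cs.isLiftable_reflPerm⟩ (π ω) =
      (ω.map cs.reflPerm).prod := by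
    rw [wordProd, map_list_prod, map_map]
    exact congrArg _ (map_congr_left fun i _ => cs.lift_apply_simple _ i)
  have hsign (ω : List B) : (-1 : ℤˣ) ^ (lis ω).count t =
      (cs.lift ⟨cs.reflPerm, cs.isLiftable_reflPerm⟩ (π ω) ((π ω)⁻¹ * t * π ω, 1)).2 := by
    simp [hlift, prod_map_reflPerm_apply, mul_assoc]
  rw [hsign, hsign, h]

end ReflectionRepresentation

theorem mem_leftInvSeq_of_isLeftDescent {ω : List B} {i : B}
    (hi : cs.IsLeftDescent (π ω) i) : s i ∈ lis ω := by
  classical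
  obtain ⟨ω', hω', hω'_eq⟩ := cs.exists_isReduced (s i * π ω)
  have hπ : π ω = π (i :: ω') := by
    rw [wordProd_cons, ← hω'_eq, ← mul_assoc, simple_mul_simple_self, one_mul]
  have hnotMem : s i ∉ lis ω' := fun hmem => by
    have := (cs.isLeftInversion_of_mem_leftInvSeq hω' hmem).2
    rw [← hω'_eq, ← mul_assoc, simple_mul_simple_self, one_mul] at this
    exact lt_asymm this hi
  have hcount : (lis (i :: ω')).count (s i) = 1 := by
    have hconj : MulAut.conj (s i) (s i) = s i := by simp
    rw [leftInvSeq, count_cons, beq_self_eq_true, if_pos rfl]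
    nth_rw 1 [← hconj]
    rw [count_map_of_injective _ _ (MulAut.conj (s i)).injective, count_eq_zero.mpr hnotMem]
  rw [← count_pos_iff, Nat.pos_iff_ne_zero]
  intro hzero
  have := cs.neg_one_pow_count_leftInvSeq_eq_of_wordProd_eq hπ (s i)
  rw [hzero, hcount] at this
  exact absurd this (by decide)

theorem simple_mul_eq_mul_simple_of_length_eq {u : W} {b i : B} (hb : ℓ (s b * u) = ℓ u + 1)
    (hi : ℓ (u * s i) = ℓ u + 1) (h : ℓ (s b * u * s i) = ℓ u) : s b * u = u * s i := by
  obtain ⟨ω, hω, rfl⟩ := cs.exists_isReduced u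
  have hdesc : cs.IsLeftDescent (π (ω ++ [i])) b := by
    rw [IsLeftDescent, wordProd_append, wordProd_singleton, ← mul_assoc, h, hi]
    exact Nat.lt_succ_self _
  have hmem := cs.mem_leftInvSeq_of_isLeftDescent hdesc
  rw [← concat_eq_append, leftInvSeq_concat, concat_eq_append, mem_append, mem_singleton] at hmem
  rcases hmem with hmem | hmem
  · have := (cs.isLeftInversion_of_mem_leftInvSeq hω hmem).2
    omega
  · rw [hmem, inv_mul_cancel_right]

/-- For `P = W_X` this says that `u` is `(X,∅)`-reduced, i.e. of minimal length in `P * u`. -/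
def IsLengthAdditive (P : Subgroup W) (u : W) : Prop :=
  ∀ x ∈ P, ℓ (x * u) = ℓ x + ℓ u

variable {cs} {P : Subgroup W}

theorem IsLengthAdditive.eq_of_mul_eq {u u' x x' : W} (hu : cs.IsLengthAdditive P u)
    (hu' : cs.IsLengthAdditive P u') (hx : x ∈ P) (hx' : x' ∈ P) (h : x * u = x' * u') :
    x = x' := by
  have hy : x'⁻¹ * x ∈ P := P.mul_mem (P.inv_mem hx') hx
  have h₁ : ℓ u' = ℓ (x'⁻¹ * x) + ℓ u := by
    rw [← hu _ hy, mul_assoc, h, inv_mul_cancel_left]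
  have h₂ : ℓ u = ℓ (x'⁻¹ * x) + ℓ u' := by
    rw [← cs.length_inv (x'⁻¹ * x), ← hu' _ (P.inv_mem hy), mul_inv_rev, inv_inv, mul_assoc,
      ← h, inv_mul_cancel_left]
  have : x'⁻¹ * x = 1 := cs.length_eq_zero_iff.mp (by omega)
  exact (inv_mul_eq_one.mp this).symm

theorem IsLengthAdditive.eq_of_mul_eq_mul_mul_simple {u u' v v' : W} {i : B}
    (hu : cs.IsLengthAdditive P u) (hu' : cs.IsLengthAdditive P u') (hv : v ∈ P) (hv' : v' ∈ P)
    (h : v' * u' = v * (u * s i)) (ht : u * s i * u⁻¹ ∉ P) : v' = v := by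
  set y := v⁻¹ * v' with hy_def
  have hyP : y ∈ P := P.mul_mem (P.inv_mem hv) hv'
  have hy : y * u' = u * s i := by rw [hy_def, mul_assoc, h, inv_mul_cancel_left]
  have h₁ : ℓ (u * s i) = ℓ y + ℓ u' := by rw [← hy, hu' y hyP]
  have h₂ : ℓ (u' * s i) = ℓ y + ℓ u := by
    have : u' * s i = y⁻¹ * u := by
      rw [eq_inv_mul_iff_mul_eq, ← mul_assoc, hy, simple_mul_simple_cancel_right]
    rw [this, hu _ (P.inv_mem hyP), cs.length_inv]
  have hlen := cs.length_mul_simple u i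
  have hlen' := cs.length_mul_simple u' i
  have hy_le : ℓ y ≤ 1 := by omega
  rcases Nat.le_one_iff_eq_zero_or_eq_one.mp hy_le with hy0 | hy1
  · rw [cs.length_eq_zero_iff, hy_def, inv_mul_eq_one] at hy0
    exact hy0.symm
  · obtain ⟨b, hb⟩ := cs.length_eq_one_iff.mp hy1
    have hu_eq : ℓ u' = ℓ u := by omega
    have hcomm : s b * u = u * s i := by
      refine cs.simple_mul_eq_mul_simple_of_length_eq ?_ (by omega) ?_
      · rw [← hb, hu y hyP, hy1, add_comm]
      · rw [mul_assoc, ← hy, hb, ← mul_assoc, simple_mul_simple_self, one_mul, hu_eq]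
    refine absurd ?_ ht
    rw [← hcomm, mul_inv_cancel_right, ← hb]
    exact hyP

theorem wordProd_take_add_one [Inhabited B] {w : List B} {j : ℕ} (hj : j < w.length) :
    π (w.take (j + 1)) = π (w.take j) * s (w.getD j default) := by
  rw [take_add_one, getElem?_eq_getElem hj, getD_eq_getElem _ _ hj, Option.toList_some,
    wordProd_append, wordProd_singleton]

variable (cs P) in
def IsPrefixFactorization (w : List B) (v u : ℕ → W) : Prop :=
  ∀ j ≤ w.length, π (w.take j) = v j * u j ∧ v j ∈ P ∧ cs.IsLengthAdditive P (u j)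

namespace IsPrefixFactorization

variable [Inhabited B] {w : List B} {v u : ℕ → W} {j : ℕ}

theorem getD_leftInvSeq (hf : cs.IsPrefixFactorization P w v u) (hj : j < w.length) :
    (lis w).getD j 1 = v j * (u j * s (w.getD j default) * (u j)⁻¹) * (v j)⁻¹ := by
  rw [cs.getD_leftInvSeq, getElem?_eq_getElem hj, ← getD_eq_getElem _ default hj, Option.map_some,
    Option.getD_some, (hf j hj.le).1]
  group

theorem getD_leftInvSeq_mem_iff (hf : cs.IsPrefixFactorization P w v u) (hj : j < w.length) :
    (lis w).getD j 1 ∈ P ↔ u j * s (w.getD j default) * (u j)⁻¹ ∈ P := by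
  have hv := (hf j hj.le).2.1
  rw [hf.getD_leftInvSeq hj, P.mul_mem_cancel_right (P.inv_mem hv), P.mul_mem_cancel_left hv]

theorem succ_eq_of_mem (hf : cs.IsPrefixFactorization P w v u) (hj : j < w.length)
    (ht : u j * s (w.getD j default) * (u j)⁻¹ ∈ P) :
    v (j + 1) = v j * (u j * s (w.getD j default) * (u j)⁻¹) := by
  obtain ⟨hdecomp, hv, hu⟩ := hf j hj.le
  obtain ⟨hdecomp', hv', hu'⟩ := hf (j + 1) hj
  refine hu'.eq_of_mul_eq hu hv' (P.mul_mem hv ht) ?_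
  rw [← hdecomp', wordProd_take_add_one hj, hdecomp]
  group

theorem succ_eq_of_not_mem (hf : cs.IsPrefixFactorization P w v u) (hj : j < w.length)
    (ht : u j * s (w.getD j default) * (u j)⁻¹ ∉ P) : v (j + 1) = v j := by
  obtain ⟨hdecomp, hv, hu⟩ := hf j hj.le
  obtain ⟨hdecomp', hv', hu'⟩ := hf (j + 1) hj
  refine hu.eq_of_mul_eq_mul_mul_simple hu' hv hv' ?_ ht
  rw [← hdecomp', wordProd_take_add_one hj, hdecomp, mul_assoc]

variable [DecidablePred (· ∈ P)] {q : ℕ → B}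

theorem wordProd_map_filter_range (hf : cs.IsPrefixFactorization P w v u)
    (hq : ∀ m ∈ (range w.length).filter (fun m => (lis w).getD m 1 ∈ P),
      s (q m) = u m * s (w.getD m default) * (u m)⁻¹) {k : ℕ} (hk : k ≤ w.length) :
    π (((range k).filter fun m => (lis w).getD m 1 ∈ P).map q) = v k := by
  induction k with
  | zero =>
    obtain ⟨hdecomp, hv, hu⟩ := hf 0 hk
    refine (hu.eq_of_mul_eq (u' := 1) (fun x _ => by simp) hv P.one_mem ?_).symm
    simpa using hdecomp.symm
  | succ k ih =>
    have hkw : k < w.length := hk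
    rw [range_succ, filter_append, map_append, wordProd_append, ih hkw.le]
    by_cases ht : u k * s (w.getD k default) * (u k)⁻¹ ∈ P
    · have hp : (lis w).getD k 1 ∈ P := (hf.getD_leftInvSeq_mem_iff hkw).mpr ht
      rw [filter_singleton, decide_eq_true hp, cond_true, map_singleton, wordProd_singleton,
        hq k (mem_filter.mpr ⟨mem_range.mpr hkw, decide_eq_true hp⟩), hf.succ_eq_of_mem hkw ht]
    · have hp : (lis w).getD k 1 ∉ P := fun hp => ht ((hf.getD_leftInvSeq_mem_iff hkw).mp hp)
      rw [filter_singleton, decide_eq_false hp, cond_false, map_nil, wordProd_nil, mul_one,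
        hf.succ_eq_of_not_mem hkw ht]

theorem leftInvSeq_map_filter_range (hf : cs.IsPrefixFactorization P w v u)
    (hq : ∀ m ∈ (range w.length).filter (fun m => (lis w).getD m 1 ∈ P),
      s (q m) = u m * s (w.getD m default) * (u m)⁻¹) {k : ℕ} (hk : k ≤ w.length) :
    lis (((range k).filter fun m => (lis w).getD m 1 ∈ P).map q) =
      ((lis w).take k).filter (· ∈ P) := by
  induction k with
  | zero => simp
  | succ k ih =>
    have hkw : k < w.length := hk
    have hklis : k < (lis w).length := by rwa [length_leftInvSeq]
    rw [range_succ, filter_append, map_append, take_add_one, getElem?_eq_getElem hklis,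
      Option.toList_some, filter_append, ← ih hkw.le, ← getD_eq_getElem _ 1 hklis]
    by_cases hp : (lis w).getD k 1 ∈ P
    · rw [filter_singleton, filter_singleton, decide_eq_true hp, cond_true, cond_true,
        map_singleton, ← concat_eq_append, leftInvSeq_concat, concat_eq_append,
        hf.wordProd_map_filter_range hq hkw.le,
        hq k (mem_filter.mpr ⟨mem_range.mpr hkw, decide_eq_true hp⟩), hf.getD_leftInvSeq hkw]
    · rw [filter_singleton, filter_singleton, decide_eq_false hp, cond_false, cond_false,
        map_nil, append_nil, append_nil]

end IsPrefixFactorization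

end CoxeterSystem

/-- Let `w` be a word on `S` and let `J = (j₁ < ⋯ < j_p)` be the (`0`-based) positions whose
reflection `r_j(w)` lies in `W_X`.  Write each prefix element as `v_j·w_j` with `v_j ∈ W_X`
and `w_j` `(X,∅)`-reduced, and let `t_n = w_{j_n}·s_{i_{j_n}}·w_{j_n}⁻¹ = s_{q_n}` with
`q_n ∈ X`.  Then the reflection sequence of the word `w_X = q_1⋯q_p` on `X` is exactly the
subsequence of `R(w)` of entries lying in `W_X`: `r_n(w_X) = r_{j_n}(w)` for all `n`. -/
theorem leftInvSeq_parabolic_subword {B W : Type*} [Inhabited B] [Group W] {M : CoxeterMatrix B}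
    (cs : CoxeterSystem M W) (X : Set B)
    [∀ a : W, Decidable (a ∈ cs.standardParabolic X)]
    (w : List B) (v wr : ℕ → W)
    (hdecomp : ∀ j ≤ w.length, cs.wordProd (w.take j) = v j * wr j)
    (hv : ∀ j ≤ w.length, v j ∈ cs.standardParabolic X)
    (hwr : ∀ j ≤ w.length, ∀ x ∈ cs.standardParabolic X,
      cs.length (x * wr j) = cs.length x + cs.length (wr j))
    (q : ℕ → B)
    (hq : ∀ m ∈ (List.range w.length).filter
        (fun m => decide ((cs.leftInvSeq w).getD m 1 ∈ cs.standardParabolic X)),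
      q m ∈ X ∧ cs.simple (q m) = wr m * cs.simple (w.getD m default) * (wr m)⁻¹) :
    ∀ n < ((List.range w.length).filter
        (fun m => decide ((cs.leftInvSeq w).getD m 1 ∈ cs.standardParabolic X))).length,
      (cs.leftInvSeq (((List.range w.length).filter
          (fun m => decide ((cs.leftInvSeq w).getD m 1 ∈ cs.standardParabolic X))).map q)).getD
            n 1 =
      (cs.leftInvSeq w).getD
        (((List.range w.length).filter
          (fun m => decide ((cs.leftInvSeq w).getD m 1 ∈ cs.standardParabolic X))).getD n 0)
        1 := by
  intro n hn
  have hf : cs.IsPrefixFactorization (cs.standardParabolic X) w v wr :=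
    fun j hj => ⟨hdecomp j hj, hv j hj, hwr j hj⟩
  rw [hf.leftInvSeq_map_filter_range (fun m hm => (hq m hm).2) le_rfl,
    take_of_length_le (by simp), filter_eq_map_filter_range _ _ 1, cs.length_leftInvSeq,
    getD_eq_getElem _ _ (by simpa using hn), getElem_map, getD_eq_getElem _ _ hn]
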